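/- arXiv:math/0609720 — 2 statements merged into one kernel-verified Lean document; each statement's English description precedes it below -/
import Mathlib

section
/- (Remark 2.) Suppose Q is B-geometrically ergodic, B ⊂ L³(ν) and ξ ∈ B. Let (B₂, ‖·‖₂) be a Banach space of measurable functions containing all products g² for g ∈ B. If there exists A > 0 such that ν(|f|^{3/2})^{2/3} ≤ A‖f‖₂ for all f ∈ B₂, and if Q is B₂-geometrically ergodic, then ψ ∈ B₂, ν(ψ) = 0, and Σ_{p≥0} ν(|Qᵖψ|^{3/2})^{2/3} < +∞ (i.e. condition (H2) holds). -/
/-! Both squares in `ψ = Q(ξ̆²) - (Qξ̆)² - σ²` lie in `B₂`, hence so does `ψ`. Invariance of `ν`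
turns `ν(Q(ξ̆²))` into `ν(ξ̆²)`, which is what the choice of `σ²` cancels, so `ν(ψ) = 0`
(all squares are integrable since `B ⊂ L³(ν) ⊂ L²(ν)`). For a centred `ψ`, `B₂`-geometric
ergodicity reads `‖Qᵖψ‖₂ ≤ C κ₀ᵖ ‖ψ‖₂`, and the `L^{3/2}` bound by `A ‖·‖₂` turns this into a
geometric bound on the terms of (H2). -/

open MeasureTheory ProbabilityTheory Filter

/-- Pointwise action of the `n`-th iterate of a kernel on a real-valued function. -/
noncomputable def kIterR {E : Type*} [MeasurableSpace E] (Q : Kernel E E) :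
    ℕ → (E → ℝ) → E → ℝ
  | 0, f => f
  | (n+1), f => fun x => ∫ y, kIterR Q n f y ∂(Q x)

open scoped ENNReal

section Invariance

variable {E : Type*} [MeasurableSpace E] {ν : Measure E} {Q : Kernel E E} {f : E → ℝ}

lemma integrable_integral_kernel_of_comp_eq (hinv : Q ∘ₘ ν = ν) (hf : Integrable f ν) :
    Integrable (fun x => ∫ y, f y ∂Q x) ν := by
  rw [← hinv, Measure.comp_eq_comp_const_apply] at hf
  simpa using hf.integral_comp

lemma integral_integral_kernel_of_comp_eq [SFinite ν] [IsSFiniteKernel Q] (hinv : Q ∘ₘ ν = ν)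
    (hf : Integrable f ν) : ∫ x, ∫ y, f y ∂Q x ∂ν = ∫ x, f x ∂ν := by
  conv_rhs => rw [← hinv, Measure.comp_eq_comp_const_apply]
  rw [← hinv, Measure.comp_eq_comp_const_apply] at hf
  simpa using (Kernel.integral_comp hf).symm

lemma integral_integral_sq_sub_sq_integral_sub_eq_zero [IsProbabilityMeasure ν]
    [IsSFiniteKernel Q] (hinv : Q ∘ₘ ν = ν) {g : E → ℝ} (hg : MemLp g 2 ν)
    (hQg : MemLp (fun x => ∫ y, g y ∂Q x) 2 ν) :
    ∫ x, (∫ y, g y ^ 2 ∂Q x - (∫ y, g y ∂Q x) ^ 2 -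
      (∫ z, g z ^ 2 ∂ν - ∫ z, (∫ y, g y ∂Q z) ^ 2 ∂ν)) ∂ν = 0 := by
  have hg2 : Integrable (fun x => g x ^ 2) ν := hg.integrable_sq
  have hQg2 : Integrable (fun x => ∫ y, g y ^ 2 ∂Q x) ν :=
    integrable_integral_kernel_of_comp_eq hinv hg2
  have hdiff : Integrable (fun x => ∫ y, g y ^ 2 ∂Q x - (∫ y, g y ∂Q x) ^ 2) ν :=
    hQg2.sub hQg.integrable_sq
  rw [integral_sub hdiff (integrable_const _), integral_sub hQg2 hQg.integrable_sq,
    integral_integral_kernel_of_comp_eq hinv hg2]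
  simp

end Invariance

section RealValued

variable {E F : Type*} [MeasurableSpace E] {Q : Kernel E E} {ι : F → E → ℂ} {T : F → F}

lemma eq_ofReal_integral_kernel (hT : ∀ f x, ι (T f) x = ∫ y, ι f y ∂Q x) {f : F} {φ : E → ℝ}
    (hf : ι f = fun x => (φ x : ℂ)) : ι (T f) = fun x => ((∫ y, φ y ∂Q x : ℝ) : ℂ) := by
  ext x
  rw [hT, hf]
  exact integral_ofReal

lemma eq_ofReal_kIterR (hT : ∀ f x, ι (T f) x = ∫ y, ι f y ∂Q x) {f : F} {φ : E → ℝ}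
    (hf : ι f = fun x => (φ x : ℂ)) (n : ℕ) :
    ι (T^[n] f) = fun x => (kIterR Q n φ x : ℂ) := by
  induction n with
  | zero => exact hf
  | succ n ih =>
    rw [Function.iterate_succ_apply']
    exact eq_ofReal_integral_kernel hT ih

lemma memLp_of_eq_ofReal {μ : Measure E} {p : ℝ≥0∞} {f : E → ℂ} {φ : E → ℝ}
    (hf : f = fun x => (φ x : ℂ)) (hfp : MemLp f p μ) : MemLp φ p μ := by
  subst hf
  simpa using hfp.re

end RealValued

lemma summable_norm_pow_apply_of_geometric {R X : Type*} [Semiring R] [NormedAddCommGroup X]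
    [Module R X] {T : X →L[R] X} {f : X} {κ C : ℝ} (hκ : κ < 1) (hC : 0 ≤ C)
    (hT : ∀ n, 1 ≤ n → ‖(T ^ n) f‖ ≤ C * κ ^ n * ‖f‖) :
    Summable fun n => ‖(T ^ n) f‖ := by
  have hbound : ∀ n, ‖(T ^ (n + 1)) f‖ ≤ C * ‖f‖ * max κ 0 ^ (n + 1) := by
    rcases le_total 0 κ with hκ0 | hκ0
    · intro n
      rw [max_eq_left hκ0]
      exact (hT _ le_add_self).trans_eq (by ring)
    · -- a nonpositive rate forces `T f = 0`, so all later iterates vanish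
      have hTf : T f = 0 := norm_le_zero_iff.1 <| (hT 1 le_rfl).trans <| by
        rw [pow_one]
        exact mul_nonpos_of_nonpos_of_nonneg (mul_nonpos_of_nonneg_of_nonpos hC hκ0)
          (norm_nonneg _)
      intro n
      rw [pow_succ, mul_apply_eq_comp, hTf, map_zero, norm_zero]
      exact mul_nonneg (mul_nonneg hC (norm_nonneg _)) (pow_nonneg (le_max_right _ _) _)
  refine (summable_nat_add_iff 1).1 (Summable.of_nonneg_of_le (fun _ => norm_nonneg _) hbound ?_)
  exact (summable_nat_add_iff 1).2 <|
    (summable_geometric_of_lt_one (le_max_right _ _) (max_lt hκ zero_lt_one)).mul_left _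

theorem remark_2_general
    {E : Type*} [MeasurableSpace E]
    (Q : Kernel E E) [IsMarkovKernel Q]
    (ν : Measure E) [IsProbabilityMeasure ν]
    (hinv : ν.bind (fun x => Q x) = ν)
    -- the Banach space B of measurable functions E → ℂ :
    (B : Type*) [NormedAddCommGroup B] [NormedSpace ℂ B]
    (ι : B →ₗ[ℂ] (E → ℂ))
    -- B ⊂ L³(ν) :
    (hL3 : ∀ f : B, MemLp (ι f) 3 ν)
    -- Q ∈ L(B) :
    (QB : B →L[ℂ] B) (hQB : ∀ (f : B) (x : E), ι (QB f) x = ∫ y, ι f y ∂(Q x))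
    -- ξ̆ = ∑_{n≥0} Qⁿξ (sum in B, with pointwise realization ξbr) :
    (xbr : B)
    (ξbr : E → ℝ) (hξbr : ι xbr = fun x => (ξbr x : ℂ))
    -- σ² = ν(ξ̆²) − ν((Qξ̆)²) and ψ = Q(ξ̆²) − (Qξ̆)² − σ²·1 :
    (σ2 : ℝ)
    (hσ2 : σ2 = ∫ x, ξbr x ^ 2 ∂ν - ∫ x, (∫ y, ξbr y ∂(Q x)) ^ 2 ∂ν)
    (ψ : E → ℝ)
    (hψ : ∀ x, ψ x = (∫ y, ξbr y ^ 2 ∂(Q x)) - (∫ y, ξbr y ∂(Q x)) ^ 2 - σ2)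
    -- the Banach space B₂ of measurable functions E → ℂ :
    (B2 : Type*) [NormedAddCommGroup B2] [NormedSpace ℂ B2]
    (ι₂ : B2 →ₗ[ℂ] (E → ℂ))
    -- B₂ contains the products g², g ∈ B :
    (hsq : ∀ g : B, ∃ h : B2, ι₂ h = fun x => (ι g x) ^ 2)
    -- 1 ∈ B₂, ν ∈ B₂' :
    (one₂ : B2) (hone₂ : ι₂ one₂ = fun _ => 1)
    -- ν(|f|^{3/2})^{2/3} ≤ A ‖f‖₂ on B₂ :
    (hA : ∃ A : ℝ, 0 < A ∧ ∀ f : B2,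
      (∫ x, ‖ι₂ f x‖ ^ ((3:ℝ)/2) ∂ν) ^ ((2:ℝ)/3) ≤ A * ‖f‖)
    -- Q ∈ L(B₂) and Q is B₂-geometrically ergodic :
    (QB₂ : B2 →L[ℂ] B2) (hQB₂ : ∀ (f : B2) (x : E), ι₂ (QB₂ f) x = ∫ y, ι₂ f y ∂(Q x))
    (H1₂ : ∃ (κ₀ C : ℝ), κ₀ < 1 ∧ 0 ≤ C ∧ ∀ n : ℕ, 1 ≤ n → ∀ f : B2,
      ‖(QB₂ ^ n) f - (∫ x, ι₂ f x ∂ν) • one₂‖ ≤ C * κ₀ ^ n * ‖f‖) :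
    -- conclusion : ψ ∈ B₂, ν(ψ) = 0, and (H2) holds
    (∃ ψ₂ : B2, ι₂ ψ₂ = fun x => (ψ x : ℂ)) ∧
    (∫ x, ψ x ∂ν = 0) ∧
    Summable (fun p : ℕ => (∫ x, |kIterR Q p ψ x| ^ ((3:ℝ)/2) ∂ν) ^ ((2:ℝ)/3)) := by
  obtain ⟨sq, hsq_eq⟩ := hsq xbr
  obtain ⟨Qsq, hQsq_eq⟩ := hsq (QB xbr)
  have hQξbr := eq_ofReal_integral_kernel hQB hξbr
  set ψ₂ := QB₂ sq - Qsq - (σ2 : ℂ) • one₂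
  have hψ₂ : ι₂ ψ₂ = fun x => (ψ x : ℂ) := by
    have hQsq := eq_ofReal_integral_kernel hQB₂ (φ := fun x => ξbr x ^ 2)
      (by rw [hsq_eq, hξbr]; push_cast; rfl)
    ext x
    simp only [ψ₂, map_sub, map_smul, hQsq, hQsq_eq, hQξbr, hone₂, hψ]
    push_cast
    simp
  have hψ_mean : ∫ x, ψ x ∂ν = 0 := by
    rw [funext hψ, hσ2]
    exact integral_integral_sq_sub_sq_integral_sub_eq_zero hinv
      ((memLp_of_eq_ofReal hξbr (hL3 xbr)).mono_exponent (by norm_num))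
      ((memLp_of_eq_ofReal hQξbr (hL3 (QB xbr))).mono_exponent (by norm_num))
  refine ⟨⟨ψ₂, hψ₂⟩, hψ_mean, ?_⟩
  obtain ⟨A, -, hA_le⟩ := hA
  obtain ⟨κ₀, C, hκ₀, hC, hdecay⟩ := H1₂
  have hψ₂_mean : ∫ x, ι₂ ψ₂ x ∂ν = 0 := by
    simp only [hψ₂]
    rw [integral_complex_ofReal, hψ_mean, Complex.ofReal_zero]
  have hsum := summable_norm_pow_apply_of_geometric hκ₀ hC fun n hn => by
    simpa [hψ₂_mean] using hdecay n hn ψ₂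
  refine Summable.of_nonneg_of_le (fun p => by positivity) (fun p => ?_) (hsum.mul_left A)
  have hiter : ι₂ ((QB₂ ^ p) ψ₂) = fun x => (kIterR Q p ψ x : ℂ) := by
    rw [FunLike.coe_pow_eq_iterate]
    exact eq_ofReal_kIterR hQB₂ hψ₂ p
  have h := hA_le ((QB₂ ^ p) ψ₂)
  rw [hiter] at h
  simpa [Complex.norm_real] using h

theorem remark_2
    {E : Type*} [MeasurableSpace E]
    (Q : Kernel E E) [IsMarkovKernel Q]
    (ν : Measure E) [IsProbabilityMeasure ν]
    (hinv : ν.bind (fun x => Q x) = ν)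
    (ξ : E → ℝ) (hξmeas : Measurable ξ) (hξint : Integrable ξ ν)
    (hξcent : ∫ x, ξ x ∂ν = 0)
    -- the Banach space B of measurable functions E → ℂ :
    (B : Type*) [NormedAddCommGroup B] [NormedSpace ℂ B] [CompleteSpace B]
    (ι : B →ₗ[ℂ] (E → ℂ)) (hιinj : Function.Injective ι)
    (hιmeas : ∀ f : B, Measurable (ι f))
    -- B ⊂ L³(ν) :
    (hL3 : ∀ f : B, MemLp (ι f) 3 ν)
    -- 1 ∈ B, ν ∈ B' :
    (one : B) (hone : ι one = fun _ => 1)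
    (hν' : ∃ Cν : ℝ, ∀ f : B, ‖∫ x, ι f x ∂ν‖ ≤ Cν * ‖f‖)
    -- Q ∈ L(B) :
    (QB : B →L[ℂ] B) (hQB : ∀ (f : B) (x : E), ι (QB f) x = ∫ y, ι f y ∂(Q x))
    -- ξ ∈ B :
    (ξB : B) (hξB : ι ξB = fun x => (ξ x : ℂ))
    -- Q is B-geometrically ergodic :
    (H1 : ∃ (κ₀ C : ℝ), κ₀ < 1 ∧ 0 ≤ C ∧ ∀ n : ℕ, 1 ≤ n → ∀ f : B,
      ‖(QB ^ n) f - (∫ x, ι f x ∂ν) • one‖ ≤ C * κ₀ ^ n * ‖f‖)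
    -- ξ̆ = ∑_{n≥0} Qⁿξ (sum in B, with pointwise realization ξbr) :
    (xbr : B) (hxbr : HasSum (fun n : ℕ => (QB ^ n) ξB) xbr)
    (ξbr : E → ℝ) (hξbr : ι xbr = fun x => (ξbr x : ℂ))
    -- σ² = ν(ξ̆²) − ν((Qξ̆)²) and ψ = Q(ξ̆²) − (Qξ̆)² − σ²·1 :
    (σ2 : ℝ)
    (hσ2 : σ2 = ∫ x, ξbr x ^ 2 ∂ν - ∫ x, (∫ y, ξbr y ∂(Q x)) ^ 2 ∂ν)
    (ψ : E → ℝ)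
    (hψ : ∀ x, ψ x = (∫ y, ξbr y ^ 2 ∂(Q x)) - (∫ y, ξbr y ∂(Q x)) ^ 2 - σ2)
    -- the Banach space B₂ of measurable functions E → ℂ :
    (B2 : Type*) [NormedAddCommGroup B2] [NormedSpace ℂ B2] [CompleteSpace B2]
    (ι₂ : B2 →ₗ[ℂ] (E → ℂ)) (hι₂inj : Function.Injective ι₂)
    (hι₂meas : ∀ f : B2, Measurable (ι₂ f))
    -- B₂ contains the products g², g ∈ B :
    (hsq : ∀ g : B, ∃ h : B2, ι₂ h = fun x => (ι g x) ^ 2)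
    -- 1 ∈ B₂, ν ∈ B₂' :
    (one₂ : B2) (hone₂ : ι₂ one₂ = fun _ => 1)
    (hν₂' : ∃ Cν : ℝ, ∀ f : B2, ‖∫ x, ι₂ f x ∂ν‖ ≤ Cν * ‖f‖)
    -- ν(|f|^{3/2})^{2/3} ≤ A ‖f‖₂ on B₂ :
    (hA : ∃ A : ℝ, 0 < A ∧ ∀ f : B2,
      (∫ x, ‖ι₂ f x‖ ^ ((3:ℝ)/2) ∂ν) ^ ((2:ℝ)/3) ≤ A * ‖f‖)
    -- Q ∈ L(B₂) and Q is B₂-geometrically ergodic :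
    (QB₂ : B2 →L[ℂ] B2) (hQB₂ : ∀ (f : B2) (x : E), ι₂ (QB₂ f) x = ∫ y, ι₂ f y ∂(Q x))
    (H1₂ : ∃ (κ₀ C : ℝ), κ₀ < 1 ∧ 0 ≤ C ∧ ∀ n : ℕ, 1 ≤ n → ∀ f : B2,
      ‖(QB₂ ^ n) f - (∫ x, ι₂ f x ∂ν) • one₂‖ ≤ C * κ₀ ^ n * ‖f‖) :
    -- conclusion : ψ ∈ B₂, ν(ψ) = 0, and (H2) holds
    (∃ ψ₂ : B2, ι₂ ψ₂ = fun x => (ψ x : ℂ)) ∧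
    (∫ x, ψ x ∂ν = 0) ∧
    Summable (fun p : ℕ => (∫ x, |kIterR Q p ψ x| ^ ((3:ℝ)/2) ∂ν) ^ ((2:ℝ)/3)) :=
  remark_2_general Q ν hinv B ι hL3 QB hQB xbr ξbr hξbr σ2 hσ2 ψ hψ B2 ι₂ hsq one₂ hone₂ hA QB₂ hQB₂
    H1₂
end

section
/- (Key estimate I_n in the proof of Theorem I.) Let 0 < τ ≤ 1, α > 0, and let λ : [−α,α] → ℂ satisfy |λ(u)| ≤ e^{−u²/4} and |λ(u) − (1 − u²/2)| ≤ C|u|^{2+τ} for all |u| ≤ α, for some constant C > 0. Then there exists a constant C' > 0 such that for every n ≥ 1 and every real t with |t| ≤ α√n, |λ(t/√n)ⁿ − e^{−t²/2}| ≤ C' n^{−τ/2} |t|^{2+τ} e^{−t²/4}. Consequently ∫_{−α√n}^{α√n} |λ(t/√n)ⁿ − e^{−t²/2}|/|t| dt = O(n^{−τ/2}). -/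
/- Key estimate on I_n in the proof of Theorem I of Hervé: if 0 < τ ≤ 1, α > 0 and
λ : ℝ → ℂ satisfies |λ(u)| ≤ e^{−u²/4} and |λ(u) − (1 − u²/2)| ≤ C|u|^{2+τ} for
|u| ≤ α, then |λ(t/√n)ⁿ − e^{−t²/2}| ≤ C' n^{−τ/2} |t|^{2+τ} e^{−t²/4} for n ≥ 1,
|t| ≤ α√n; consequently ∫_{−α√n}^{α√n} |λ(t/√n)ⁿ − e^{−t²/2}|/|t| dt = O(n^{−τ/2}). -/

open MeasureTheory intervalIntegral

/-- Telescoping bound: `‖a^(n+1) - b^(n+1)‖ ≤ (n+1) * M^n * ‖a - b‖`. -/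
lemma norm_pow_sub_pow_le_aux (a b : ℂ) (M : ℝ) (ha : ‖a‖ ≤ M) (hb : ‖b‖ ≤ M) :
    ∀ n : ℕ, ‖a ^ (n + 1) - b ^ (n + 1)‖ ≤ ((n : ℝ) + 1) * M ^ n * ‖a - b‖ := by
  have hM : 0 ≤ M := le_trans (norm_nonneg a) ha
  intro n
  induction n with
  | zero => simp
  | succ n ih =>
    have key : a ^ (n + 2) - b ^ (n + 2)
        = a * (a ^ (n + 1) - b ^ (n + 1)) + (a - b) * b ^ (n + 1) := by ring
    calc ‖a ^ (n + 1 + 1) - b ^ (n + 1 + 1)‖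
        ≤ ‖a‖ * ‖a ^ (n + 1) - b ^ (n + 1)‖ + ‖a - b‖ * ‖b‖ ^ (n + 1) := by
          rw [show n + 1 + 1 = n + 2 from rfl, key]
          refine (norm_add_le _ _).trans ?_
          rw [norm_mul, norm_mul, norm_pow]
      _ ≤ M * (((n : ℝ) + 1) * M ^ n * ‖a - b‖) + ‖a - b‖ * M ^ (n + 1) := by
          gcongr
      _ = (((n : ℕ) + 1 : ℕ) + 1 : ℝ) * M ^ (n + 1) * ‖a - b‖ := by push_cast; ring

/-- `|exp(-x) - (1 - x)| ≤ x²` for `x ≥ 0`. -/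
lemma abs_exp_neg_sub_le (x : ℝ) (hx : 0 ≤ x) : |Real.exp (-x) - (1 - x)| ≤ x ^ 2 := by
  have h1 : 1 - x ≤ Real.exp (-x) := by
    have := Real.add_one_le_exp (-x); linarith
  have hmul : Real.exp (-x) * Real.exp x = 1 := by
    rw [← Real.exp_add]; simp
  have he : 1 + x ≤ Real.exp x := by have := Real.add_one_le_exp x; linarith
  have h2 : Real.exp (-x) ≤ 1 - x + x ^ 2 := by
    nlinarith [Real.exp_pos (-x), Real.exp_pos x, sq_nonneg x,
      mul_nonneg (mul_nonneg hx hx) hx]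
  rw [abs_le]
  constructor <;> nlinarith [sq_nonneg x]

set_option maxHeartbeats 1000000 in
theorem key_estimate_In
    (τ α C : ℝ) (hτ0 : 0 < τ) (hτ1 : τ ≤ 1) (hα : 0 < α) (hC : 0 < C)
    (lam : ℝ → ℂ) (hmeas : Measurable lam)
    (h1 : ∀ u : ℝ, |u| ≤ α → ‖lam u‖ ≤ Real.exp (-u ^ 2 / 4))
    (h2 : ∀ u : ℝ, |u| ≤ α →
      ‖lam u - ((1 - u ^ 2 / 2 : ℝ) : ℂ)‖ ≤ C * |u| ^ (2 + τ)) :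
    (∃ C' : ℝ, 0 < C' ∧ ∀ n : ℕ, 1 ≤ n → ∀ t : ℝ, |t| ≤ α * Real.sqrt n →
      ‖lam (t / Real.sqrt n) ^ n - ((Real.exp (-t ^ 2 / 2) : ℝ) : ℂ)‖
        ≤ C' * (n : ℝ) ^ (-τ / 2) * |t| ^ (2 + τ) * Real.exp (-t ^ 2 / 4)) ∧
    ∃ C'' : ℝ, ∀ n : ℕ, 1 ≤ n →
      (∫ t in (-(α * Real.sqrt n))..(α * Real.sqrt n),
          ‖lam (t / Real.sqrt n) ^ n - ((Real.exp (-t ^ 2 / 2) : ℝ) : ℂ)‖ / |t|)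
        ≤ C'' * (n : ℝ) ^ (-τ / 2) := by
  set C₂ : ℝ := C + α ^ (2 - τ) / 4 with hC₂def
  have hC₂ : 0 < C₂ := by
    have : 0 ≤ α ^ (2 - τ) := Real.rpow_nonneg hα.le _
    dsimp [C₂]; linarith
  set C' : ℝ := C₂ * Real.exp (α ^ 2 / 4) with hC'def
  have hC' : 0 < C' := mul_pos hC₂ (Real.exp_pos _)
  -- the pointwise estimate
  have hpt : ∀ n : ℕ, 1 ≤ n → ∀ t : ℝ, |t| ≤ α * Real.sqrt n →
      ‖lam (t / Real.sqrt n) ^ n - ((Real.exp (-t ^ 2 / 2) : ℝ) : ℂ)‖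
        ≤ C' * (n : ℝ) ^ (-τ / 2) * |t| ^ (2 + τ) * Real.exp (-t ^ 2 / 4) := by
    intro n hn t ht
    obtain ⟨m, rfl⟩ : ∃ m, n = m + 1 := ⟨n - 1, (Nat.succ_pred_eq_of_pos hn).symm⟩
    have hn0 : (0 : ℝ) < ((m + 1 : ℕ) : ℝ) := by positivity
    have hs : 0 < Real.sqrt ((m + 1 : ℕ) : ℝ) := Real.sqrt_pos.mpr hn0
    set s : ℝ := Real.sqrt ((m + 1 : ℕ) : ℝ) with hsdef
    set u : ℝ := t / s with hudef
    have hs2 : s ^ 2 = ((m + 1 : ℕ) : ℝ) := Real.sq_sqrt hn0.le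
    have hu : |u| ≤ α := by
      rw [hudef, abs_div, abs_of_pos hs, div_le_iff₀ hs]
      exact ht
    have hnu : ((m + 1 : ℕ) : ℝ) * u ^ 2 = t ^ 2 := by
      rw [hudef, div_pow, hs2]
      field_simp
    have hu2α : u ^ 2 ≤ α ^ 2 := by
      rw [← sq_abs]
      exact pow_le_pow_left₀ (abs_nonneg u) hu 2
    -- b and its power
    set b : ℂ := ((Real.exp (-u ^ 2 / 2) : ℝ) : ℂ) with hbdef
    have hb : ((Real.exp (-t ^ 2 / 2) : ℝ) : ℂ) = b ^ (m + 1) := by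
      rw [hbdef, ← Complex.ofReal_pow, ← Real.exp_nat_mul]
      congr 2
      rw [← hnu]; push_cast; ring
    -- difference bound
    have hdiff : ‖lam u - b‖ ≤ C₂ * |u| ^ (2 + τ) := by
      have e1 := h2 u hu
      have e2 : ‖((1 - u ^ 2 / 2 : ℝ) : ℂ) - b‖ ≤ (α ^ (2 - τ) / 4) * |u| ^ (2 + τ) := by
        rw [hbdef, ← Complex.ofReal_sub, Complex.norm_real, Real.norm_eq_abs]
        have habs : |(1 - u ^ 2 / 2) - Real.exp (-u ^ 2 / 2)| ≤ (u ^ 2 / 2) ^ 2 := by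
          rw [abs_sub_comm, show -u ^ 2 / 2 = -(u ^ 2 / 2) by ring]
          exact abs_exp_neg_sub_le _ (by positivity)
        refine habs.trans ?_
        have hsplit : |u| ^ ((2 + τ) + (2 - τ)) = |u| ^ (2 + τ) * |u| ^ (2 - τ) :=
          Real.rpow_add' (abs_nonneg u) (by norm_num)
        have h4 : (u ^ 2 / 2) ^ 2 = |u| ^ ((2 + τ) + (2 - τ)) / 4 := by
          rw [show ((2 + τ) + (2 - τ)) = ((4 : ℕ) : ℝ) by push_cast; ring,
            Real.rpow_natCast, show |u| ^ (4 : ℕ) = (|u| ^ 2) ^ 2 by ring, sq_abs]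
          ring
        rw [h4, hsplit]
        have hle : |u| ^ (2 - τ) ≤ α ^ (2 - τ) :=
          Real.rpow_le_rpow (abs_nonneg u) hu (by linarith)
        have hnn : 0 ≤ |u| ^ (2 + τ) := Real.rpow_nonneg (abs_nonneg u) _
        calc |u| ^ (2 + τ) * |u| ^ (2 - τ) / 4
            ≤ |u| ^ (2 + τ) * α ^ (2 - τ) / 4 := by gcongr
          _ = (α ^ (2 - τ) / 4) * |u| ^ (2 + τ) := by ring
      calc ‖lam u - b‖ ≤ ‖lam u - ((1 - u ^ 2 / 2 : ℝ) : ℂ)‖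
            + ‖((1 - u ^ 2 / 2 : ℝ) : ℂ) - b‖ := by
            have : lam u - b = (lam u - ((1 - u ^ 2 / 2 : ℝ) : ℂ))
                + (((1 - u ^ 2 / 2 : ℝ) : ℂ) - b) := by ring
            rw [this]; exact norm_add_le _ _
        _ ≤ C * |u| ^ (2 + τ) + (α ^ (2 - τ) / 4) * |u| ^ (2 + τ) := add_le_add e1 e2
        _ = C₂ * |u| ^ (2 + τ) := by rw [hC₂def]; ring
    -- norms bounded by M
    set M : ℝ := Real.exp (-u ^ 2 / 4) with hMdef
    have hM0 : 0 ≤ M := (Real.exp_pos _).le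
    have hla : ‖lam u‖ ≤ M := h1 u hu
    have hlb : ‖b‖ ≤ M := by
      rw [hbdef, Complex.norm_real, Real.norm_eq_abs, abs_of_pos (Real.exp_pos _)]
      exact Real.exp_le_exp.mpr (by nlinarith [sq_nonneg u])
    have key := norm_pow_sub_pow_le_aux (lam u) b M hla hlb m
    -- bound M^m
    have hMm : M ^ m ≤ Real.exp (-t ^ 2 / 4) * Real.exp (α ^ 2 / 4) := by
      rw [hMdef, ← Real.exp_nat_mul, ← Real.exp_add]
      apply Real.exp_le_exp.mpr
      have hmu : (m : ℝ) * (-u ^ 2 / 4) = -t ^ 2 / 4 + u ^ 2 / 4 := by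
        have h' : ((m + 1 : ℕ) : ℝ) * u ^ 2 = t ^ 2 := hnu
        push_cast at h' ⊢
        linear_combination (-1 / 4) * h'
      rw [hmu]
      linarith
    -- rpow computation
    have hrpow : ((m + 1 : ℕ) : ℝ) * |u| ^ (2 + τ)
        = ((m + 1 : ℕ) : ℝ) ^ (-τ / 2) * |t| ^ (2 + τ) := by
      set N : ℝ := ((m + 1 : ℕ) : ℝ) with hNdef
      have hNc : N ^ (-τ / 2 : ℝ) * N ^ (1 / 2 * (2 + τ) : ℝ) = N := by
        rw [← Real.rpow_add hn0, show -τ / 2 + 1 / 2 * (2 + τ) = 1 by ring, Real.rpow_one]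
      have hNcpos : 0 < N ^ (1 / 2 * (2 + τ) : ℝ) := Real.rpow_pos_of_pos hn0 _
      rw [hudef, abs_div, abs_of_pos hs, Real.div_rpow (abs_nonneg t) hs.le, hsdef,
        Real.sqrt_eq_rpow, ← Real.rpow_mul hn0.le]
      calc N * (|t| ^ (2 + τ) / N ^ (1 / 2 * (2 + τ) : ℝ))
          = (N ^ (-τ / 2 : ℝ) * N ^ (1 / 2 * (2 + τ) : ℝ))
              * (|t| ^ (2 + τ) / N ^ (1 / 2 * (2 + τ) : ℝ)) := by rw [hNc]
        _ = N ^ (-τ / 2) * |t| ^ (2 + τ) := by field_simp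
    -- assemble
    have hune : 0 ≤ |u| ^ (2 + τ) := Real.rpow_nonneg (abs_nonneg u) _
    calc ‖lam (t / s) ^ (m + 1) - ((Real.exp (-t ^ 2 / 2) : ℝ) : ℂ)‖
        = ‖lam u ^ (m + 1) - b ^ (m + 1)‖ := by rw [hb, hudef]
      _ ≤ ((m : ℝ) + 1) * M ^ m * ‖lam u - b‖ := key
      _ ≤ ((m : ℝ) + 1) * (Real.exp (-t ^ 2 / 4) * Real.exp (α ^ 2 / 4))
            * (C₂ * |u| ^ (2 + τ)) := by
          gcongr
      _ = (C₂ * Real.exp (α ^ 2 / 4)) * (((m + 1 : ℕ) : ℝ) * |u| ^ (2 + τ))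
            * Real.exp (-t ^ 2 / 4) := by push_cast; ring
      _ = C' * ((m + 1 : ℕ) : ℝ) ^ (-τ / 2) * |t| ^ (2 + τ)
            * Real.exp (-t ^ 2 / 4) := by rw [hrpow, hC'def]; ring
  refine ⟨⟨C', hC', hpt⟩, ⟨C' * 8 * ∫ x : ℝ, Real.exp (-(1 / 8) * x ^ 2), ?_⟩⟩
  intro n hn
  have hn0 : (0 : ℝ) < (n : ℝ) := by exact_mod_cast hn
  set a : ℝ := α * Real.sqrt n with hadef
  have ha : 0 ≤ a := by positivity
  set D : ℝ := C' * (n : ℝ) ^ (-τ / 2) with hDdef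
  have hD : 0 ≤ D := by positivity
  have hfg : ∀ t ∈ Set.Icc (-a) a,
      ‖lam (t / Real.sqrt n) ^ n - ((Real.exp (-t ^ 2 / 2) : ℝ) : ℂ)‖ / |t|
        ≤ D * (8 * Real.exp (-(1 / 8) * t ^ 2)) := by
    intro t htmem
    rcases eq_or_ne t 0 with rfl | ht0
    · rw [abs_zero, div_zero]
      positivity
    · have htabs : |t| ≤ a := abs_le.mpr ⟨htmem.1, htmem.2⟩
      have hpos : 0 < |t| := abs_pos.mpr ht0
      have hb1 := hpt n hn t htabs
      rw [div_le_iff₀ hpos]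
      have hsplit : |t| ^ (2 + τ) = |t| ^ (1 + τ) * |t| := by
        rw [show (2 + τ : ℝ) = (1 + τ) + 1 by ring, Real.rpow_add hpos, Real.rpow_one]
      have h1p : |t| ^ (1 + τ) ≤ 1 + t ^ 2 := by
        rcases le_total |t| 1 with h | h
        · have hle1 : |t| ^ (1 + τ) ≤ 1 :=
            Real.rpow_le_one (abs_nonneg t) h (by linarith)
          nlinarith [sq_nonneg t]
        · have h2' : |t| ^ (1 + τ) ≤ |t| ^ (2 : ℝ) :=
            Real.rpow_le_rpow_of_exponent_le h (by linarith)
          have h2'' : |t| ^ (2 : ℝ) = t ^ 2 := by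
            rw [show (2 : ℝ) = ((2 : ℕ) : ℝ) by norm_num, Real.rpow_natCast, sq_abs]
          nlinarith [sq_nonneg t]
      have h8 : 1 + t ^ 2 ≤ 8 * Real.exp (t ^ 2 / 8) := by
        have := Real.add_one_le_exp (t ^ 2 / 8)
        nlinarith [Real.exp_pos (t ^ 2 / 8)]
      have hexp : Real.exp (t ^ 2 / 8) * Real.exp (-t ^ 2 / 4)
          = Real.exp (-(1 / 8) * t ^ 2) := by
        rw [← Real.exp_add]; congr 1; ring
      have hmain : |t| ^ (1 + τ) * Real.exp (-t ^ 2 / 4)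
          ≤ 8 * Real.exp (-(1 / 8) * t ^ 2) := by
        calc |t| ^ (1 + τ) * Real.exp (-t ^ 2 / 4)
            ≤ (8 * Real.exp (t ^ 2 / 8)) * Real.exp (-t ^ 2 / 4) := by
              have := h1p.trans h8
              exact mul_le_mul_of_nonneg_right this (Real.exp_pos _).le
          _ = 8 * Real.exp (-(1 / 8) * t ^ 2) := by rw [mul_assoc, hexp]
      calc ‖lam (t / Real.sqrt n) ^ n - ((Real.exp (-t ^ 2 / 2) : ℝ) : ℂ)‖
          ≤ C' * (n : ℝ) ^ (-τ / 2) * |t| ^ (2 + τ) * Real.exp (-t ^ 2 / 4) := hb1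
        _ = D * (|t| ^ (1 + τ) * Real.exp (-t ^ 2 / 4)) * |t| := by
            rw [hDdef, hsplit]; ring
        _ ≤ D * (8 * Real.exp (-(1 / 8) * t ^ 2)) * |t| := by
            gcongr
      -- done
  have hgcont : Continuous fun t : ℝ => D * (8 * Real.exp (-(1 / 8) * t ^ 2)) :=
    continuous_const.mul (continuous_const.mul
      (Real.continuous_exp.comp (continuous_const.mul (continuous_pow 2))))
  have hgint : IntervalIntegrable (fun t : ℝ => D * (8 * Real.exp (-(1 / 8) * t ^ 2)))
      volume (-a) a := hgcont.intervalIntegrable _ _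
  have hfmeas : Measurable fun t : ℝ =>
      ‖lam (t / Real.sqrt n) ^ n - ((Real.exp (-t ^ 2 / 2) : ℝ) : ℂ)‖ / |t| := by
    apply Measurable.div
    · apply Measurable.norm
      apply Measurable.sub
      · exact ((hmeas.comp (measurable_id.div_const _)).pow_const n)
      · exact Complex.measurable_ofReal.comp (by fun_prop)
    · exact continuous_abs.measurable
  have hfint : IntervalIntegrable (fun t : ℝ =>
      ‖lam (t / Real.sqrt n) ^ n - ((Real.exp (-t ^ 2 / 2) : ℝ) : ℂ)‖ / |t|)
      volume (-a) a := by
    apply hgint.mono_fun' hfmeas.aestronglyMeasurable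
    have hmem : ∀ᵐ x ∂(volume.restrict (Set.uIoc (-a) a)), x ∈ Set.uIoc (-a) a :=
      ae_restrict_mem measurableSet_uIoc
    filter_upwards [hmem] with x hx
    have hx' : x ∈ Set.Icc (-a) a := by
      rw [Set.uIoc_of_le (by linarith : -a ≤ a)] at hx
      exact Set.Ioc_subset_Icc_self hx
    rw [Real.norm_eq_abs, abs_of_nonneg (div_nonneg (norm_nonneg _) (abs_nonneg _))]
    exact hfg x hx'
  have hint : Integrable (fun t : ℝ => Real.exp (-(1 / 8) * t ^ 2)) :=
    integrable_exp_neg_mul_sq (by norm_num)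
  calc (∫ t in (-a)..a,
        ‖lam (t / Real.sqrt n) ^ n - ((Real.exp (-t ^ 2 / 2) : ℝ) : ℂ)‖ / |t|)
      ≤ ∫ t in (-a)..a, D * (8 * Real.exp (-(1 / 8) * t ^ 2)) :=
        integral_mono_on (by linarith) hfint hgint hfg
    _ = (D * 8) * ∫ t in (-a)..a, Real.exp (-(1 / 8) * t ^ 2) := by
        rw [← intervalIntegral.integral_const_mul]
        congr 1; ext t; ring
    _ ≤ (D * 8) * ∫ t : ℝ, Real.exp (-(1 / 8) * t ^ 2) := by
        apply mul_le_mul_of_nonneg_left _ (by positivity)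
        rw [intervalIntegral.integral_of_le (by linarith)]
        exact setIntegral_le_integral hint
          (Filter.Eventually.of_forall fun x => (Real.exp_pos _).le)
    _ = (C' * 8 * ∫ x : ℝ, Real.exp (-(1 / 8) * x ^ 2)) * (n : ℝ) ^ (-τ / 2) := by
        rw [hDdef]; ring
end
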